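/- For η ∈ ℝ, define M(η) := [[(9−2η)/2, −(3−η)/2, −(6−η)/4, −(6−η)/4], [−(3−η)/2, 1/2, (2−η)/4, (2−η)/4], [−(6−η)/4, (2−η)/4, 1/2, 1/2], [−(6−η)/4, (2−η)/4, 1/2, 1/2]] and P(η) := [[0,0,0,0], [0, −3/2, (6−η)/4, (6−η)/4], [0, (6−η)/4, 0, 0], [0, (6−η)/4, 0, 0]], both 4×4 symmetric real matrices. Then for every η ∈ (0,3) there exists Δ̄ > 0 such that for all Δ ∈ [0, Δ̄], the matrix M(η) + Δ·P(η) is positive semidefinite. -/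

import Mathlib

/-
The quadratic form of `M(η) + Δ • P(η)` depends on `x` only through `x 0`, `x 1` and
`s = x 2 + x 3`. Completing the square in `s` leaves the binary form
`η(4-η)/8 u² + Δ(6-η)²/4 u v + Δ(9-2η-Δ(6-η)²/4)/2 v²` in `u = x 0 - x 1`, `v = x 1`, whose
discriminant is `-Δ(9-2η)(η(4-η) - Δ(6-η)²)/4`. Hence `Δ̄ = η(4-η)/(6-η)²` works.
-/

noncomputable section

/-- The 4×4 matrix arising in the certificate proof that the pattern `(3-η, 3/2)` is
straightforward. -/
def certM (η : ℝ) : Matrix (Fin 4) (Fin 4) ℝ :=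
  !![(9 - 2 * η) / 2, -(3 - η) / 2, -(6 - η) / 4, -(6 - η) / 4;
     -(3 - η) / 2, 1 / 2, (2 - η) / 4, (2 - η) / 4;
     -(6 - η) / 4, (2 - η) / 4, 1 / 2, 1 / 2;
     -(6 - η) / 4, (2 - η) / 4, 1 / 2, 1 / 2]

/-- The 4×4 perturbation matrix in the certificate proof for the pattern `(3-η, 3/2)`. -/
def certP (η : ℝ) : Matrix (Fin 4) (Fin 4) ℝ :=
  !![0, 0, 0, 0;
     0, -3 / 2, (6 - η) / 4, (6 - η) / 4;
     0, (6 - η) / 4, 0, 0;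
     0, (6 - η) / 4, 0, 0]

open Matrix

theorem quadratic_nonneg_of_discrim_nonpos {a b c : ℝ} (ha : 0 < a) (h : discrim a b c ≤ 0)
    (u v : ℝ) : 0 ≤ a * u ^ 2 + b * u * v + c * v ^ 2 := by
  have hsq : 4 * a * (a * u ^ 2 + b * u * v + c * v ^ 2)
      = (2 * a * u + b * v) ^ 2 + (-discrim a b c) * v ^ 2 := by
    rw [discrim]; ring
  have : 0 ≤ 4 * a * (a * u ^ 2 + b * u * v + c * v ^ 2) := by
    rw [hsq]; have := neg_nonneg.2 h; positivity
  exact nonneg_of_mul_nonneg_right this (by positivity)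

theorem certM_isHermitian (η : ℝ) : (certM η).IsHermitian := by
  rw [isHermitian_iff_isSymm]
  ext i j
  fin_cases i <;> fin_cases j <;> rfl

theorem certP_isHermitian (η : ℝ) : (certP η).IsHermitian := by
  rw [isHermitian_iff_isSymm]
  ext i j
  fin_cases i <;> fin_cases j <;> rfl

theorem dotProduct_certM_add_smul_certP (η Δ : ℝ) (x : Fin 4 → ℝ) :
    star x ⬝ᵥ ((certM η + Δ • certP η) *ᵥ x) =
      (x 2 + x 3 - ((6 - η) * x 0 - (2 - η + Δ * (6 - η)) * x 1) / 2) ^ 2 / 2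
      + (η * (4 - η) / 8 * (x 0 - x 1) ^ 2 + Δ * (6 - η) ^ 2 / 4 * (x 0 - x 1) * x 1
        + Δ * (9 - 2 * η - Δ * (6 - η) ^ 2 / 4) / 2 * x 1 ^ 2) := by
  simp only [dotProduct, Pi.star_apply, star_trivial, mulVec, certM, certP, Matrix.add_apply,
    smul_of, smul_cons, smul_eq_mul, smul_empty, of_apply, cons_val', cons_val_fin_one,
    Fin.sum_univ_four, cons_val_zero, cons_val_one, cons_val]
  ring

/-- For every `η ∈ (0,3)`, `M(η) + Δ·P(η)` remains positive semidefinite for all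
sufficiently small `Δ ≥ 0`. -/
theorem certM_perturbed_psd :
    ∀ η : ℝ, 0 < η → η < 3 →
      ∃ Δbar : ℝ, 0 < Δbar ∧ ∀ Δ : ℝ, 0 ≤ Δ → Δ ≤ Δbar →
        (certM η + Δ • certP η).PosSemidef := by
  intro η hη0 hη3
  have hα : 0 < η * (4 - η) := by nlinarith
  have hsq : 0 < (6 - η) ^ 2 := by nlinarith
  refine ⟨η * (4 - η) / (6 - η) ^ 2, by positivity, fun Δ hΔ0 hΔ => ?_⟩
  have hΔ' : Δ * (6 - η) ^ 2 ≤ η * (4 - η) := (le_div_iff₀ hsq).1 hΔ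
  have hdisc : discrim (η * (4 - η) / 8) (Δ * (6 - η) ^ 2 / 4)
      (Δ * (9 - 2 * η - Δ * (6 - η) ^ 2 / 4) / 2) ≤ 0 := by
    have h9 : 0 ≤ 9 - 2 * η := by linarith
    have hfactor := mul_nonneg (mul_nonneg hΔ0 h9) (sub_nonneg.2 hΔ')
    rw [discrim]
    linear_combination (1 / 4) * hfactor
  refine .of_dotProduct_mulVec_nonneg
    ((certM_isHermitian η).add ((certP_isHermitian η).smul (IsSelfAdjoint.all Δ))) fun x => ?_
  rw [dotProduct_certM_add_smul_certP]
  exact add_nonneg (by positivity)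
    (quadratic_nonneg_of_discrim_nonpos (by positivity) hdisc (x 0 - x 1) (x 1))

end
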